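/- arXiv:2103.12887 — 2 statements merged into one kernel-verified Lean document; each statement's English description precedes it below -/
import Mathlib

section
/- Let (Ω, 𝔄, P) be a probability space, and let Θ₀ ⊇ Θ₁ ⊇ ⋯ ⊇ Θ_m be a decreasing chain of measurable events with P(Θ₀) = 1 and P(Θ_i) > 0 for 0 ≤ i ≤ m−1; set π_i = P(Θ_i | Θ_{i−1}). Let 𝔉₁ ⊆ ⋯ ⊆ 𝔉_m ⊆ 𝔄 be a filtration and π̂₁, …, π̂_m : Ω → [0,1] random variables such that each π̂_i is 𝔉_i-measurable, E[π̂₁] = π₁, and E[π̂_{i+1} | 𝔉_i] = π_{i+1} almost surely for 1 ≤ i ≤ m−1. Then the g-MLSS estimator τ̂_mlss = ∏_{i=1}^{m} π̂_i satisfies E[τ̂_mlss] = ∏_{i=1}^{m} π_i = P(Θ_m). -/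
open MeasureTheory ProbabilityTheory Finset

/-- Proposition 4.1 (unbiasedness of g-MLSS): for a decreasing chain of events
`Θ 0 ⊇ ⋯ ⊇ Θ m` with `P(Θ 0) = 1`, `P(Θ i) > 0` for `i ≤ m−1`, and
`π i = P(Θ i | Θ (i−1))`, if each `π̂ i` is `𝔉 i`-measurable with values in
`[0,1]`, `E[π̂ 1] = π 1`, and `E[π̂ (i+1) | 𝔉 i] = π (i+1)` a.s., then the
g-MLSS estimator `∏ π̂ i` satisfies `E[∏ π̂ i] = ∏ π i = P(Θ m)`. -/
theorem stmt_6 {Ω : Type*} [m0 : MeasurableSpace Ω] (μ : Measure Ω) [IsProbabilityMeasure μ]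
    (m : ℕ) (hm : 1 ≤ m)
    (Θ : ℕ → Set Ω) (hΘmeas : ∀ i ≤ m, MeasurableSet (Θ i))
    (hchain : ∀ i < m, Θ (i + 1) ⊆ Θ i)
    (hΘ0 : μ (Θ 0) = 1) (hΘpos : ∀ i ≤ m - 1, 0 < μ (Θ i))
    (π : ℕ → ℝ)
    (hπ : ∀ i, 1 ≤ i → i ≤ m → π i = (μ[Θ i | Θ (i - 1)]).toReal)
    (F : ℕ → MeasurableSpace Ω)
    (hFle : ∀ i, 1 ≤ i → i ≤ m → F i ≤ m0)
    (hFmono : ∀ i j, 1 ≤ i → i ≤ j → j ≤ m → F i ≤ F j)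
    (πhat : ℕ → Ω → ℝ)
    (hmeas : ∀ i, 1 ≤ i → i ≤ m → Measurable[F i] (πhat i))
    (hrange : ∀ i, 1 ≤ i → i ≤ m → ∀ ω, πhat i ω ∈ Set.Icc (0 : ℝ) 1)
    (hfirst : ∫ ω, πhat 1 ω ∂μ = π 1)
    (hcond : ∀ i, 1 ≤ i → i ≤ m - 1 →
      μ[πhat (i + 1) | F i] =ᵐ[μ] fun _ => π (i + 1)) :
    ∫ ω, ∏ i ∈ Finset.Icc 1 m, πhat i ω ∂μ = ∏ i ∈ Finset.Icc 1 m, π i ∧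
      ∏ i ∈ Finset.Icc 1 m, π i = (μ (Θ m)).toReal := by
  -- boundedness and integrability facts
  have hXrange : ∀ k, k ≤ m → ∀ ω, (∏ i ∈ Finset.Icc 1 k, πhat i ω) ∈ Set.Icc (0:ℝ) 1 := by
    intro k hk ω
    constructor
    · exact Finset.prod_nonneg fun i hi => (hrange i (Finset.mem_Icc.mp hi).1
        (le_trans (Finset.mem_Icc.mp hi).2 hk) ω).1
    · exact Finset.prod_le_one (fun i hi => (hrange i (Finset.mem_Icc.mp hi).1
        (le_trans (Finset.mem_Icc.mp hi).2 hk) ω).1)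
        (fun i hi => (hrange i (Finset.mem_Icc.mp hi).1
        (le_trans (Finset.mem_Icc.mp hi).2 hk) ω).2)
  have hXmeas : ∀ k, 1 ≤ k → k ≤ m →
      Measurable[F k] fun ω => ∏ i ∈ Finset.Icc 1 k, πhat i ω := by
    intro k hk1 hkm
    apply Finset.measurable_prod
    intro i hi
    obtain ⟨hi1, hik⟩ := Finset.mem_Icc.mp hi
    exact (hmeas i hi1 (le_trans hik hkm)).mono (hFmono i k hi1 hik hkm) le_rfl
  have hint : ∀ (f : Ω → ℝ), Measurable f → (∀ ω, f ω ∈ Set.Icc (0:ℝ) 1) →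
      Integrable f μ := by
    intro f hf hb
    refine Integrable.mono' (integrable_const (1:ℝ)) hf.aestronglyMeasurable ?_
    filter_upwards with ω
    rw [Real.norm_eq_abs, abs_le]
    exact ⟨le_trans (by norm_num) (hb ω).1, (hb ω).2⟩
  -- Part 1 by induction
  have part1 : ∀ k, 1 ≤ k → k ≤ m →
      ∫ ω, ∏ i ∈ Finset.Icc 1 k, πhat i ω ∂μ = ∏ i ∈ Finset.Icc 1 k, π i := by
    intro k hk1 hkm
    induction k, hk1 using Nat.le_induction with
    | base => simpa using hfirst
    | succ k hk1 ih =>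
      have hkm' : k ≤ m := le_of_lt hkm
      have hkm1 : k ≤ m - 1 := Nat.le_sub_one_of_lt hkm
      have hFk : F k ≤ m0 := hFle k hk1 hkm'
      set X : Ω → ℝ := fun ω => ∏ i ∈ Finset.Icc 1 k, πhat i ω with hX
      have hXsm : StronglyMeasurable[F k] X := (hXmeas k hk1 hkm').stronglyMeasurable
      have hXm0 : Measurable X := (hXmeas k hk1 hkm').mono hFk le_rfl
      have hYm0 : Measurable (πhat (k+1)) :=
        (hmeas (k+1) (by omega) hkm).mono (hFle (k+1) (by omega) hkm) le_rfl
      have hYint : Integrable (πhat (k+1)) μ :=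
        hint _ hYm0 (hrange (k+1) (by omega) hkm)
      have hXYint : Integrable (X * πhat (k+1)) μ := by
        refine hint _ (hXm0.mul hYm0) ?_
        intro ω
        have h1 := hXrange k hkm' ω
        have h2 := hrange (k+1) (by omega) hkm ω
        exact ⟨mul_nonneg h1.1 h2.1, mul_le_one₀ h1.2 h2.1 h2.2⟩
      have hprod : ∀ ω, ∏ i ∈ Finset.Icc 1 (k+1), πhat i ω = X ω * πhat (k+1) ω := by
        intro ω
        rw [Finset.prod_Icc_succ_top (by omega : 1 ≤ k + 1)]
      calc ∫ ω, ∏ i ∈ Finset.Icc 1 (k+1), πhat i ω ∂μ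
          = ∫ ω, (X * πhat (k+1)) ω ∂μ := by
            exact integral_congr_ae (Filter.Eventually.of_forall hprod)
        _ = ∫ ω, (μ[X * πhat (k+1) | F k]) ω ∂μ := (integral_condExp hFk).symm
        _ = ∫ ω, X ω * π (k+1) ∂μ := by
            refine integral_congr_ae ?_
            have h1 := condExp_mul_of_stronglyMeasurable_left hXsm hXYint hYint
            have h2 := hcond k hk1 hkm1
            filter_upwards [h1, h2] with ω hω1 hω2
            rw [hω1]
            simp only [Pi.mul_apply]
            rw [hω2]
        _ = (∫ ω, X ω ∂μ) * π (k+1) := integral_mul_const _ _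
        _ = (∏ i ∈ Finset.Icc 1 k, π i) * π (k+1) := by rw [ih hkm']
        _ = ∏ i ∈ Finset.Icc 1 (k+1), π i := (Finset.prod_Icc_succ_top (by omega) _).symm
  -- Part 2 by induction
  have part2 : ∀ k, 1 ≤ k → k ≤ m →
      ∏ i ∈ Finset.Icc 1 k, π i = (μ (Θ k)).toReal := by
    intro k hk1 hkm
    induction k, hk1 using Nat.le_induction with
    | base =>
      simp only [Finset.Icc_self, Finset.prod_singleton]
      rw [hπ 1 le_rfl hm]
      norm_num
      rw [cond_apply (hΘmeas 0 (by omega)) μ (Θ 1), hΘ0,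
        Set.inter_eq_self_of_subset_right (hchain 0 hm)]
      simp
    | succ k hk1 ih =>
      have hkm' : k ≤ m := le_of_lt hkm
      have hkm1 : k ≤ m - 1 := Nat.le_sub_one_of_lt hkm
      have hpos : μ (Θ k) ≠ 0 := (hΘpos k hkm1).ne'
      have hfin : μ (Θ k) ≠ ⊤ := measure_ne_top μ _
      rw [Finset.prod_Icc_succ_top (by omega : 1 ≤ k + 1), ih hkm',
        hπ (k+1) (by omega) hkm]
      simp only [Nat.add_sub_cancel]
      rw [cond_apply (hΘmeas k hkm') μ (Θ (k+1)),
        Set.inter_eq_self_of_subset_right (hchain k hkm),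
        ENNReal.toReal_mul, ENNReal.toReal_inv]
      have htr : (μ (Θ k)).toReal ≠ 0 := by
        simp [ENNReal.toReal_ne_zero, hpos, hfin]
      field_simp
  exact ⟨part1 m hm le_rfl, part2 m hm le_rfl⟩
end

section
/- Let (Ω, 𝔄, P) be a probability space, n₀ ≥ 1 a natural number, r > 0, p ∈ [0,1], q ∈ [0,1], p₂ ∈ [0,1], v ≥ 0 real numbers. Let N₁ be a square-integrable random variable with E[N₁] = n₀·p and Var(N₁) = n₀·p·(1−p), let Y be a square-integrable random variable such that, almost surely, E[Y | σ(N₁)] = r·q·N₁ and E[Y² | σ(N₁)] − (E[Y | σ(N₁)])² = v·N₁, and let S be a square-integrable random variable independent of Y with Var(S) = n₀·p₂·(1−p₂). Then Var(Y/(n₀·r) + S/n₀) = q²·p·(1−p)/n₀ + p·v/(n₀·r²) + p₂·(1−p₂)/n₀. -/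
/-!
Split the estimator into its non-skipping part `Y / (n₀ r)` and its skipping part `S / n₀`.
By independence their variances add. For `Y`, the law of total variance
`Var Y = E[Var(Y | N₁)] + Var(E[Y | N₁])` turns the linear conditional moments
`E[Y | N₁] = r q N₁` and `Var(Y | N₁) = v N₁` into `Var Y = v E N₁ + (r q)² Var N₁`,
which only involves the first two moments of `N₁`.
-/

open MeasureTheory ProbabilityTheory

namespace ProbabilityTheory

variable {Ω : Type*} {m m₀ : MeasurableSpace Ω} {μ : Measure[m₀] Ω} {X Y : Ω → ℝ}

lemma IndepFun.variance_div_add_div (hXY : IndepFun X Y μ) (hX : MemLp X 2 μ) (hY : MemLp Y 2 μ)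
    (a b : ℝ) :
    Var[fun ω ↦ X ω / a + Y ω / b; μ] = Var[X; μ] / a ^ 2 + Var[Y; μ] / b ^ 2 := by
  have hindep : IndepFun (fun ω ↦ a⁻¹ * X ω) (fun ω ↦ b⁻¹ * Y ω) μ :=
    hXY.comp (measurable_const_mul _) (measurable_const_mul _)
  simp_rw [div_eq_inv_mul]
  rw [hindep.variance_fun_add (hX.const_mul _) (hY.const_mul _), variance_const_mul,
    variance_const_mul, inv_pow, inv_pow]

lemma variance_eq_of_condExp_ae_eq_const_mul_of_condVar_ae_eq_const_mul
    [IsProbabilityMeasure μ] (hm : m ≤ m₀) (hY : MemLp Y 2 μ) {a b : ℝ}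
    (hmean : μ[Y | m] =ᵐ[μ] fun ω ↦ a * X ω) (hvar : Var[Y; μ | m] =ᵐ[μ] fun ω ↦ b * X ω) :
    Var[Y; μ] = b * μ[X] + a ^ 2 * Var[X; μ] := by
  rw [← integral_condVar_add_variance_condExp hm hY, integral_congr_ae hvar,
    variance_congr hmean, integral_const_mul, variance_const_mul]

end ProbabilityTheory

theorem stmt_10_general {Ω : Type*} [m0 : MeasurableSpace Ω] (μ : Measure Ω) [IsProbabilityMeasure μ]
    (n₀ : ℕ) (hn₀ : 1 ≤ n₀) (r : ℝ) (hr : 0 < r)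
    (p : ℝ) (q : ℝ)
    (p₂ : ℝ) (v : ℝ)
    (N₁ : Ω → ℝ) (hN₁meas : Measurable N₁)
    (hN₁mean : ∫ ω, N₁ ω ∂μ = (n₀ : ℝ) * p)
    (hN₁var : variance N₁ μ = (n₀ : ℝ) * p * (1 - p))
    (Y : Ω → ℝ) (hYL2 : MemLp Y 2 μ)
    (hcondmean : MeasureTheory.condExp (MeasurableSpace.comap N₁ Real.measurableSpace) μ Y
      =ᵐ[μ] fun ω => r * q * N₁ ω)
    (hcondvar : (fun ω =>
        MeasureTheory.condExp (MeasurableSpace.comap N₁ Real.measurableSpace) μ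
            (fun ω' => (Y ω') ^ 2) ω -
          (MeasureTheory.condExp (MeasurableSpace.comap N₁ Real.measurableSpace) μ Y ω) ^ 2)
      =ᵐ[μ] fun ω => v * N₁ ω)
    (S : Ω → ℝ) (hSL2 : MemLp S 2 μ) (hSindep : IndepFun Y S μ)
    (hSvar : variance S μ = (n₀ : ℝ) * p₂ * (1 - p₂)) :
    variance (fun ω => Y ω / ((n₀ : ℝ) * r) + S ω / (n₀ : ℝ)) μ =
      q ^ 2 * p * (1 - p) / (n₀ : ℝ) + p * v / ((n₀ : ℝ) * r ^ 2) +
        p₂ * (1 - p₂) / (n₀ : ℝ) := by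
  have hm : MeasurableSpace.comap N₁ Real.measurableSpace ≤ m0 := hN₁meas.comap_le
  have hY_condVar : Var[Y; μ | MeasurableSpace.comap N₁ Real.measurableSpace]
      =ᵐ[μ] fun ω ↦ v * N₁ ω :=
    (condVar_ae_eq_condExp_sq_sub_sq_condExp hm hYL2).trans hcondvar
  have hY_var : Var[Y; μ] = v * ((n₀ : ℝ) * p) + (r * q) ^ 2 * ((n₀ : ℝ) * p * (1 - p)) := by
    rw [variance_eq_of_condExp_ae_eq_const_mul_of_condVar_ae_eq_const_mul hm hYL2 hcondmean
      hY_condVar, hN₁mean, hN₁var]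
  have hn : (n₀ : ℝ) ≠ 0 := Nat.cast_ne_zero.2 (by omega)
  rw [hSindep.variance_div_add_div hYL2 hSL2, hY_var, hSvar]
  field_simp
  ring

/-- Equation (10) of the paper: variance of the two-level g-MLSS estimator with
level-skipping, `Var(Y/(n₀·r) + S/n₀) = q²·p·(1−p)/n₀ + p·v/(n₀·r²) + p₂·(1−p₂)/n₀`,
where `Y` counts target hits from non-skipping paths and `S` counts target hits
from level-skipping paths, independent of `Y`. -/
theorem stmt_10 {Ω : Type*} [m0 : MeasurableSpace Ω] (μ : Measure Ω) [IsProbabilityMeasure μ]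
    (n₀ : ℕ) (hn₀ : 1 ≤ n₀) (r : ℝ) (hr : 0 < r)
    (p : ℝ) (hp : p ∈ Set.Icc (0 : ℝ) 1) (q : ℝ) (hq : q ∈ Set.Icc (0 : ℝ) 1)
    (p₂ : ℝ) (hp₂ : p₂ ∈ Set.Icc (0 : ℝ) 1) (v : ℝ) (hv : 0 ≤ v)
    (N₁ : Ω → ℝ) (hN₁meas : Measurable N₁) (hN₁L2 : MemLp N₁ 2 μ)
    (hN₁mean : ∫ ω, N₁ ω ∂μ = (n₀ : ℝ) * p)
    (hN₁var : variance N₁ μ = (n₀ : ℝ) * p * (1 - p))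
    (Y : Ω → ℝ) (hYL2 : MemLp Y 2 μ)
    (hcondmean : MeasureTheory.condExp (MeasurableSpace.comap N₁ Real.measurableSpace) μ Y
      =ᵐ[μ] fun ω => r * q * N₁ ω)
    (hcondvar : (fun ω =>
        MeasureTheory.condExp (MeasurableSpace.comap N₁ Real.measurableSpace) μ
            (fun ω' => (Y ω') ^ 2) ω -
          (MeasureTheory.condExp (MeasurableSpace.comap N₁ Real.measurableSpace) μ Y ω) ^ 2)
      =ᵐ[μ] fun ω => v * N₁ ω)
    (S : Ω → ℝ) (hSL2 : MemLp S 2 μ) (hSindep : IndepFun Y S μ)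
    (hSvar : variance S μ = (n₀ : ℝ) * p₂ * (1 - p₂)) :
    variance (fun ω => Y ω / ((n₀ : ℝ) * r) + S ω / (n₀ : ℝ)) μ =
      q ^ 2 * p * (1 - p) / (n₀ : ℝ) + p * v / ((n₀ : ℝ) * r ^ 2) +
        p₂ * (1 - p₂) / (n₀ : ℝ) :=
  stmt_10_general (m0 := m0) μ n₀ hn₀ r hr p q p₂ v N₁ hN₁meas hN₁mean hN₁var Y hYL2 hcondmean
    hcondvar S hSL2 hSindep hSvar
end
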